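/- Single-variable non-identifiability: given an aADMG G, if there is an undirected path in G_W between X ∈ W and some child of X, then p(W \ X | X̂, W') is not identifiable; specifically, for the aADMG with nodes X, Z₁,…,Z_m, A, edges X→A, X−Z₁, Z₁−Z₂, …, Z_{m−1}−Z_m, Z_m−A, there exist two structural equation models (with parameters (α₁,β₁) and (α₂,β₂) satisfying α₁+β₁ = α₂+β₂ but β₁ ≠ β₂) inducing the same observational distribution p(X, Z₁,…,Z_m, A) but different interventional distributions p(Z₁,…,Z_m, A | X̂). -/

import Mathlib

open MeasureTheory ProbabilityTheory

/-!
Both models make every observed variable a linear function of the single Gaussian noise `U_X`,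
and `A = (α + β) U_X` observationally, so only `α + β` is visible in the observational law.
After `do(X = x̂)` the two roles separate: with `(α, β) = (1, 0)` the intervened `A` is `U_X`,
Gaussian and hence atomless, while with `(α, β) = (0, 1)` and `x̂ = 0` it is the constant `0`.
-/

theorem MeasureTheory.Measure.AbsolutelyContinuous.ne_dirac {α : Type*} [MeasurableSpace α]
    [MeasurableSingletonClass α] {ν ρ : Measure α} [NullSingletonClass ρ] (h : ν ≪ ρ) (c : α) :
    ν ≠ Measure.dirac c := by
  intro hν
  have : ν {c} = 0 := h (measure_singleton c)
  simp [hν] at this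

theorem MeasureTheory.Measure.map_ne_map_of_map_comp_ne {Ω α β : Type*} [MeasurableSpace Ω]
    [MeasurableSpace α] [MeasurableSpace β] {μ : Measure Ω} {f₁ f₂ : Ω → α} {g : α → β}
    (hf₁ : Measurable f₁) (hf₂ : Measurable f₂) (hg : Measurable g)
    (h : μ.map (g ∘ f₁) ≠ μ.map (g ∘ f₂)) : μ.map f₁ ≠ μ.map f₂ := by
  contrapose! h
  rw [← Measure.map_map hg hf₁, ← Measure.map_map hg hf₂, h]

section Model

variable {Ω : Type*}

/-- Observed `(X, Z₁, …, Z_m, A)` of the model with parameters `(α, β)`. -/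
def observedVector (m : ℕ) (U : Ω → ℝ) (α β : ℝ) : Ω → Fin (m + 2) → ℝ :=
  fun ω i => if (i : ℕ) = m + 1 then β * U ω + α * U ω else U ω

/-- `(Z₁, …, Z_m, A)` of the model with parameters `(α, β)` under `do(X = xhat)`. -/
def intervenedVector (m : ℕ) (U : Ω → ℝ) (α β xhat : ℝ) : Ω → Fin (m + 1) → ℝ :=
  fun ω i => if (i : ℕ) = m then β * xhat + α * U ω else U ω

theorem observedVector_eq_of_add_eq (m : ℕ) (U : Ω → ℝ) {α₁ β₁ α₂ β₂ : ℝ}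
    (h : α₁ + β₁ = α₂ + β₂) : observedVector m U α₁ β₁ = observedVector m U α₂ β₂ := by
  funext ω i
  unfold observedVector
  split_ifs
  · linear_combination U ω * h
  · rfl

theorem measurable_intervenedVector [MeasurableSpace Ω] (m : ℕ) {U : Ω → ℝ} (hU : Measurable U) (α β xhat : ℝ) :
    Measurable (intervenedVector m U α β xhat) :=
  measurable_pi_lambda _ fun i => by
    unfold intervenedVector
    split_ifs <;> fun_prop

theorem eval_last_comp_intervenedVector (m : ℕ) (U : Ω → ℝ) (α β xhat : ℝ) :
    (fun v => v (Fin.last m)) ∘ intervenedVector m U α β xhat = fun ω => β * xhat + α * U ω := by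
  funext ω
  simp [intervenedVector]

end Model

theorem single_variable_nonidentifiable_general
    {Ω : Type*} [MeasurableSpace Ω] (μ : Measure Ω) [IsProbabilityMeasure μ]
    (m : ℕ) (U : Ω → ℝ) (hU : Measurable U)
    (mean : ℝ) (σ : NNReal) (hσ : σ ≠ 0)
    (hlaw : μ.map U = gaussianReal mean σ) :
    ∃ α₁ β₁ α₂ β₂ : ℝ, α₁ + β₁ = α₂ + β₂ ∧ β₁ ≠ β₂ ∧
      (μ.map (fun ω (i : Fin (m + 2)) =>
          if (i : ℕ) = m + 1 then β₁ * U ω + α₁ * U ω else U ω) =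
        μ.map (fun ω (i : Fin (m + 2)) =>
          if (i : ℕ) = m + 1 then β₂ * U ω + α₂ * U ω else U ω)) ∧
      ∃ xhat : ℝ,
        μ.map (fun ω (i : Fin (m + 1)) =>
            if (i : ℕ) = m then β₁ * xhat + α₁ * U ω else U ω) ≠
          μ.map (fun ω (i : Fin (m + 1)) =>
            if (i : ℕ) = m then β₂ * xhat + α₂ * U ω else U ω) := by
  refine ⟨1, 0, 0, 1, by norm_num, by norm_num,
    congrArg μ.map (observedVector_eq_of_add_eq m U (by norm_num)), 0, ?_⟩
  have hlast : μ.map ((fun v => v (Fin.last m)) ∘ intervenedVector m U 1 0 0) ≠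
      μ.map ((fun v => v (Fin.last m)) ∘ intervenedVector m U 0 1 0) := by
    simp only [eval_last_comp_intervenedVector, mul_zero, zero_mul, one_mul, zero_add, add_zero,
      Measure.map_const, measure_univ, one_smul, hlaw]
    exact Measure.AbsolutelyContinuous.ne_dirac (gaussianReal_absolutelyContinuous mean hσ) 0
  exact Measure.map_ne_map_of_map_comp_ne (measurable_intervenedVector m hU 1 0 0)
    (measurable_intervenedVector m hU 0 1 0) (measurable_pi_apply _) hlast

/-- Non-identifiability counterexample (necessity part of Theorem 9 of the
paper): for the aADMG with nodes `X, Z₁, …, Z_m, A` and equations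
`U_X ~ N(mean, σ)`, `U_{Z_i} = U_X`, `U_A = α·U_{Z_m}`, `X = U_X`,
`Z_j = U_{Z_j}`, `A = β·X + U_A`, there are two parameterizations
`(α₁, β₁)` and `(α₂, β₂)` with `α₁ + β₁ = α₂ + β₂` and `β₁ ≠ β₂` that induce
the same observational joint distribution of `(X, Z₁, …, Z_m, A)` (coordinates
`0, 1, …, m, m+1`) but different post-intervention distributions of
`(Z₁, …, Z_m, A)` under `do(X = x̂)`, where then `A = β·x̂ + α·U_X`. -/
theorem single_variable_nonidentifiable
    {Ω : Type*} [MeasurableSpace Ω] (μ : Measure Ω) [IsProbabilityMeasure μ]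
    (m : ℕ) (hm : 1 ≤ m) (U : Ω → ℝ) (hU : Measurable U)
    (mean : ℝ) (σ : NNReal) (hσ : σ ≠ 0)
    (hlaw : μ.map U = gaussianReal mean σ) :
    ∃ α₁ β₁ α₂ β₂ : ℝ, α₁ + β₁ = α₂ + β₂ ∧ β₁ ≠ β₂ ∧
      (μ.map (fun ω (i : Fin (m + 2)) =>
          if (i : ℕ) = m + 1 then β₁ * U ω + α₁ * U ω else U ω) =
        μ.map (fun ω (i : Fin (m + 2)) =>
          if (i : ℕ) = m + 1 then β₂ * U ω + α₂ * U ω else U ω)) ∧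
      ∃ xhat : ℝ,
        μ.map (fun ω (i : Fin (m + 1)) =>
            if (i : ℕ) = m then β₁ * xhat + α₁ * U ω else U ω) ≠
          μ.map (fun ω (i : Fin (m + 1)) =>
            if (i : ℕ) = m then β₂ * xhat + α₂ * U ω else U ω) :=
  single_variable_nonidentifiable_general μ m U hU mean σ hσ hlaw
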